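/- arXiv:1202.6112 — 4 statements merged into one kernel-verified Lean document; each statement's English description precedes it below -/
import Mathlib

section
/- Let λ > 1 and let μ ∈ (0,1) be its conjugate, i.e. μ·e^{−μ} = λ·e^{−λ}. Then x = λ − μ is the unique positive real solution of the equation 1 − e^{−x} − x·e^{−x} = (1 − μ)·(1 − μ/λ). -/
/-!
Conjugacy gives `e^{-(λ-μ)} = μ/λ`, which turns `p₂⁺(λ-μ)` into `(1-μ)(1-μ/λ)` by a direct
computation. Uniqueness holds because `p₂⁺` has derivative `x e^{-x} > 0`, so it is strictly
increasing on `[0, ∞)`.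
-/

open Real

/-- `p₂⁺(x)`, the probability that a Poisson(x) random variable is at least `2`. -/
noncomputable def poissonTailTwo (x : ℝ) : ℝ := 1 - exp (-x) - x * exp (-x)

theorem hasDerivAt_poissonTailTwo (x : ℝ) : HasDerivAt poissonTailTwo (x * exp (-x)) x := by
  have hexp : HasDerivAt (fun x : ℝ => exp (-x)) (-exp (-x)) x := by
    simpa using (hasDerivAt_neg x).exp
  exact (((hasDerivAt_const x 1).sub hexp).sub ((hasDerivAt_id' x).mul hexp)).congr_deriv
    (by ring)

theorem strictMonoOn_poissonTailTwo : StrictMonoOn poissonTailTwo (Set.Ici 0) := by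
  refine strictMonoOn_of_deriv_pos (convex_Ici 0)
    (fun x _ => (hasDerivAt_poissonTailTwo x).continuousAt.continuousWithinAt) fun x hx => ?_
  rw [interior_Ici] at hx
  rw [(hasDerivAt_poissonTailTwo x).deriv]
  exact mul_pos hx (exp_pos _)

theorem exp_neg_sub_eq_div_of_mul_exp_neg_eq {lam mu : ℝ} (hlam : lam ≠ 0)
    (hconj : mu * exp (-mu) = lam * exp (-lam)) : exp (-(lam - mu)) = mu / lam := by
  have hsplit : exp (-(lam - mu)) * exp (-mu) = exp (-lam) := by
    rw [← exp_add]
    ring_nf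
  rw [eq_div_iff hlam]
  refine mul_right_cancel₀ (exp_pos (-mu)).ne' ?_
  linear_combination lam * hsplit - hconj

theorem poissonTailTwo_sub_of_mul_exp_neg_eq {lam mu : ℝ} (hlam : lam ≠ 0)
    (hconj : mu * exp (-mu) = lam * exp (-lam)) :
    poissonTailTwo (lam - mu) = (1 - mu) * (1 - mu / lam) := by
  rw [poissonTailTwo, exp_neg_sub_eq_div_of_mul_exp_neg_eq hlam hconj]
  field_simp

/-- Let `λ > 1` and let `μ ∈ (0,1)` be its conjugate, i.e. `μ·e^{−μ} = λ·e^{−λ}`.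
Then `x = λ − μ` is the unique positive real solution of
`1 − e^{−x} − x·e^{−x} = (1 − μ)·(1 − μ/λ)`. -/
theorem two_core_density_equation (lam mu : ℝ) (hlam : 1 < lam)
    (hmu : mu ∈ Set.Ioo (0 : ℝ) 1)
    (hconj : mu * Real.exp (-mu) = lam * Real.exp (-lam)) :
    (1 - Real.exp (-(lam - mu)) - (lam - mu) * Real.exp (-(lam - mu))
        = (1 - mu) * (1 - mu / lam)) ∧
      ∀ x : ℝ, 0 < x →
        1 - Real.exp (-x) - x * Real.exp (-x) = (1 - mu) * (1 - mu / lam) →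
          x = lam - mu := by
  have hvalue := poissonTailTwo_sub_of_mul_exp_neg_eq (by positivity) hconj
  have hgap : 0 ≤ lam - mu := by linarith [hmu.2]
  refine ⟨hvalue, fun x hx hfx => ?_⟩
  exact strictMonoOn_poissonTailTwo.injOn hx.le hgap (hfx.trans hvalue.symm)
end

section
/- Fix Λ₀ > 0 and M > 0. There exist constants c₁, c₂ > 0 and N ∈ ℕ such that for all n ≥ N, all natural numbers m, r with |m − n·(1 − e^{−Λ₀}(1 + Λ₀ + Λ₀²/2))| ≤ M√n and |r − n·Λ₀·(1 − e^{−Λ₀}(1 + Λ₀))| ≤ M√n, and all reals x > 0 with |x − Λ₀| ≤ M/√n, one has c₁ ≤ e^{−n(x−Λ₀)} · ((1 + x + x²/2)/(1 + Λ₀ + Λ₀²/2))^{n−m} · (x/Λ₀)^{r} ≤ c₂ (in particular m ≤ n for such n). -/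
/-!
Put `ε = x - Λ₀`, `f(y) = 1 + y + y²/2`, `p = e^{-Λ₀} f(Λ₀)` and `q = 1 - e^{-Λ₀}(1 + Λ₀)`, so that
`n - m = np + O(√n)`, `r = nΛ₀q + O(√n)` and `ε = O(1/√n)`. The logarithm of the ratio is
`-nε + (n - m) log (f x / f Λ₀) + r log (x / Λ₀)`. Both logarithms agree with their tangent lines
`(f' / f)(Λ₀) ε` and `ε / Λ₀` up to `O(ε²)`, and the resulting first-order terms add up to
`nε (p f'(Λ₀) / f(Λ₀) + q) = nε`, cancelling `-nε`. What is left, `O(√n) · ε` plus `O(n) · ε²`,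
is bounded, so the ratio stays between `e^{-C}` and `e^C`.
-/

open Real Filter Topology Asymptotics

theorem ContDiffAt.isBigO_sub_sub_mul_sub {g : ℝ → ℝ} {x₀ a : ℝ} (hg : ContDiffAt ℝ 2 g x₀)
    (hg' : HasDerivAt g a x₀) :
    (fun x ↦ g x - g x₀ - a * (x - x₀)) =O[𝓝 x₀] fun x ↦ (x - x₀) ^ 2 := by
  obtain ⟨u, hu, hgu⟩ := hg.contDiffOn le_rfl (by simp)
  obtain ⟨δ, hδ, hball⟩ := Metric.mem_nhds_iff.1 hu
  have hopen := Metric.isOpen_ball (x := x₀) (ε := δ)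
  have htaylor := taylor_isLittleO (convex_ball x₀ δ) (Metric.mem_ball_self hδ) (hgu.mono hball)
  rw [hopen.nhdsWithin_eq (Metric.mem_ball_self hδ)] at htaylor
  have hderiv : derivWithin g (Metric.ball x₀ δ) x₀ = a :=
    (hg'.hasDerivWithinAt).derivWithin (hopen.uniqueDiffWithinAt (Metric.mem_ball_self hδ))
  refine htaylor.isBigO.add (isBigO_const_mul_self
    (iteratedDerivWithin 2 g (Metric.ball x₀ δ) x₀ / 2) (fun x ↦ (x - x₀) ^ 2) _) |>.congr_left ?_
  intro x
  simp only [taylorWithinEval_succ, taylor_within_zero_eval, CharP.cast_eq_zero, zero_add,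
    Nat.factorial_zero, Nat.factorial_one, Nat.cast_one, Nat.reduceAdd, mul_one, inv_one, pow_one,
    one_mul, iteratedDerivWithin_one, hderiv, smul_eq_mul]
  ring

theorem isBigO_log_div_sub {f : ℝ → ℝ} {x₀ f' : ℝ} (hf : ContDiffAt ℝ 2 f x₀)
    (hf' : HasDerivAt f f' x₀) (hx₀ : f x₀ ≠ 0) :
    (fun x ↦ log (f x / f x₀) - f' / f x₀ * (x - x₀)) =O[𝓝 x₀] fun x ↦ (x - x₀) ^ 2 := by
  have hg := (hf.div_const (f x₀)).log (by simp [hx₀])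
  have hg' := (hf'.div_const (f x₀)).log (by simp [hx₀])
  refine (hg.isBigO_sub_sub_mul_sub hg').congr_left fun x ↦ ?_
  simp [hx₀]

theorem Asymptotics.IsBigO.exists_pos_abs_le_sq {g : ℝ → ℝ} {x₀ : ℝ}
    (h : g =O[𝓝 x₀] fun x ↦ (x - x₀) ^ 2) :
    ∃ K > 0, ∃ δ > 0, ∀ x, |x - x₀| < δ → |g x| ≤ K * (x - x₀) ^ 2 := by
  obtain ⟨K, hK, hKg⟩ := h.exists_pos
  obtain ⟨δ, hδ, hg⟩ := Metric.eventually_nhds_iff.1 hKg.bound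
  refine ⟨K, hK, δ, hδ, fun x hx ↦ ?_⟩
  simpa using hg hx

theorem abs_mul_sub_mul_le_of_sqrt_window {n M p K a s ε L : ℝ} (hn : 1 ≤ n) (hp : 0 ≤ p)
    (hK : 0 ≤ K) (hs : |s - n * p| ≤ M * √n) (hε : |ε| ≤ M / √n) (hL : |L - a * ε| ≤ K * ε ^ 2) :
    |s * L - n * p * (a * ε)| ≤ M ^ 2 * |a| + K * M ^ 2 * (p + M) := by
  have hσ : 1 ≤ √n := by simpa using Real.sqrt_le_sqrt hn
  have hM : 0 ≤ M := by nlinarith [abs_nonneg (s - n * p)]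
  have hεσ : |ε| * √n ≤ M := (le_div_iff₀ (by linarith)).1 hε
  have hε2 : n * ε ^ 2 ≤ M ^ 2 := by
    rw [← Real.sq_sqrt (by linarith : 0 ≤ n), ← sq_abs ε, ← mul_pow, mul_comm]
    exact pow_le_pow_left₀ (by positivity) hεσ 2
  have hσn : √n ≤ n := by nlinarith [Real.sq_sqrt (by linarith : 0 ≤ n)]
  have hs' : |s| ≤ n * p + M * √n := by
    have := abs_sub_abs_le_abs_sub s (n * p)
    rw [abs_of_nonneg (by positivity : 0 ≤ n * p)] at this; linarith
  have hfluct : |(s - n * p) * (a * ε)| ≤ M ^ 2 * |a| := by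
    rw [abs_mul, abs_mul]
    calc |s - n * p| * (|a| * |ε|) ≤ M * √n * (|a| * |ε|) := by gcongr
      _ = M * |a| * (|ε| * √n) := by ring
      _ ≤ M * |a| * M := by gcongr
      _ = M ^ 2 * |a| := by ring
  have hrem : |s * (L - a * ε)| ≤ K * M ^ 2 * (p + M) := by
    rw [abs_mul]
    calc |s| * |L - a * ε| ≤ (n * p + M * √n) * (K * ε ^ 2) := by gcongr
      _ = K * (p * (n * ε ^ 2) + M * (√n * ε ^ 2)) := by ring
      _ ≤ K * (p * M ^ 2 + M * M ^ 2) := by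
        gcongr
        calc √n * ε ^ 2 ≤ n * ε ^ 2 := by gcongr
          _ ≤ M ^ 2 := hε2
      _ = K * M ^ 2 * (p + M) := by ring
  calc |s * L - n * p * (a * ε)| = |(s - n * p) * (a * ε) + s * (L - a * ε)| := by ring_nf
    _ ≤ _ := (abs_add_le _ _).trans (add_le_add hfluct hrem)

theorem exists_forall_div_sqrt_lt (M : ℝ) {δ : ℝ} (hδ : 0 < δ) :
    ∃ N : ℕ, ∀ n : ℕ, N ≤ n → 1 ≤ (n : ℝ) ∧ M / √n < δ := by
  have hlim : Tendsto (fun n : ℕ ↦ M / √n) atTop (𝓝 0) :=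
    tendsto_const_nhds.div_atTop (tendsto_sqrt_atTop.comp tendsto_natCast_atTop_atTop)
  have hone : ∀ᶠ n : ℕ in atTop, 1 ≤ (n : ℝ) :=
    (eventually_ge_atTop 1).mono fun n hn ↦ Nat.one_le_cast.2 hn
  exact eventually_atTop.1 (hone.and (hlim.eventually (gt_mem_nhds hδ)))

theorem le_and_abs_natCast_sub_sub_le {m n : ℕ} {p M : ℝ} (hn : 0 < n) (hp : M / √n < p)
    (hm : |(m : ℝ) - n * (1 - p)| ≤ M * √n) : m ≤ n ∧ |((n - m : ℕ) : ℝ) - n * p| ≤ M * √n := by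
  have hσ : M * √n < p * n := by
    have := mul_lt_mul_of_pos_right hp (Nat.cast_pos.2 hn)
    rwa [div_mul_eq_mul_div, mul_div_assoc, Real.div_sqrt] at this
  have hmn : m ≤ n := by exact_mod_cast (by linarith [(abs_le.1 hm).2] : (m : ℝ) ≤ n)
  refine ⟨hmn, ?_⟩
  rw [Nat.cast_sub hmn, ← abs_neg]
  convert hm using 2
  ring

theorem exp_neg_mul_one_add_le_one (x : ℝ) : exp (-x) * (1 + x) ≤ 1 := by
  calc exp (-x) * (1 + x) ≤ exp (-x) * exp x := by gcongr; linarith [add_one_le_exp x]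
    _ = 1 := by rw [← exp_add, neg_add_cancel, exp_zero]

theorem hasDerivAt_one_add_add_sq_div_two (x : ℝ) :
    HasDerivAt (fun y ↦ 1 + y + y ^ 2 / 2) (1 + x) x := by
  refine (((hasDerivAt_id' x).const_add 1).add ((hasDerivAt_pow 2 x).div_const 2)).congr_deriv ?_
  norm_num

theorem exp_mul_pow_mul_pow {b c : ℝ} (hb : 0 < b) (hc : 0 < c) (z : ℝ) (k l : ℕ) :
    exp z * b ^ k * c ^ l = exp (z + k * log b + l * log c) := by
  rw [exp_add, exp_add, exp_nat_mul, exp_nat_mul, exp_log hb, exp_log hc]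

theorem likelihood_ratio_bounded_general (Λ₀ M : ℝ) (hΛ : 0 < Λ₀) :
    ∃ c₁ c₂ : ℝ, 0 < c₁ ∧ 0 < c₂ ∧ ∃ N : ℕ, ∀ n : ℕ, N ≤ n → ∀ m r : ℕ,
      |(m : ℝ) - n * (1 - Real.exp (-Λ₀) * (1 + Λ₀ + Λ₀ ^ 2 / 2))| ≤ M * Real.sqrt n →
      |(r : ℝ) - n * Λ₀ * (1 - Real.exp (-Λ₀) * (1 + Λ₀))| ≤ M * Real.sqrt n →
      ∀ x : ℝ, 0 < x → |x - Λ₀| ≤ M / Real.sqrt n →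
        m ≤ n ∧
        c₁ ≤ Real.exp (-(n * (x - Λ₀)))
              * ((1 + x + x ^ 2 / 2) / (1 + Λ₀ + Λ₀ ^ 2 / 2)) ^ (n - m)
              * (x / Λ₀) ^ r ∧
        Real.exp (-(n * (x - Λ₀)))
              * ((1 + x + x ^ 2 / 2) / (1 + Λ₀ + Λ₀ ^ 2 / 2)) ^ (n - m)
              * (x / Λ₀) ^ r ≤ c₂ := by
  set D := 1 + Λ₀ + Λ₀ ^ 2 / 2
  set p := exp (-Λ₀) * D
  set q := 1 - exp (-Λ₀) * (1 + Λ₀)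
  have hD : 0 < D := by positivity
  have hp : 0 < p := by positivity
  have hq : 0 ≤ Λ₀ * q := mul_nonneg hΛ.le (sub_nonneg.2 (exp_neg_mul_one_add_le_one Λ₀))
  have hlin : p * ((1 + Λ₀) / D) + Λ₀ * q * (1 / Λ₀) = 1 := by field_simp; ring
  obtain ⟨K₁, hK₁, δ₁, hδ₁, hL₁⟩ := (isBigO_log_div_sub (by fun_prop)
    (hasDerivAt_one_add_add_sq_div_two Λ₀) hD.ne').exists_pos_abs_le_sq
  obtain ⟨K₂, hK₂, δ₂, hδ₂, hL₂⟩ := (isBigO_log_div_sub (f := fun y ↦ y) (by fun_prop)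
    (hasDerivAt_id' Λ₀) hΛ.ne').exists_pos_abs_le_sq
  obtain ⟨N, hN⟩ := exists_forall_div_sqrt_lt M (lt_min (lt_min hδ₁ hδ₂) hp)
  set C := (M ^ 2 * |(1 + Λ₀) / D| + K₁ * M ^ 2 * (p + M))
    + (M ^ 2 * |1 / Λ₀| + K₂ * M ^ 2 * (Λ₀ * q + M))
  refine ⟨exp (-C), exp C, exp_pos _, exp_pos _, N, fun n hn m r hm hr x hx hxΛ ↦ ?_⟩
  obtain ⟨hn1, hwin⟩ := hN n hn
  simp only [lt_min_iff] at hwin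
  obtain ⟨hmn, hs⟩ := le_and_abs_natCast_sub_sub_le (by exact_mod_cast hn1) hwin.2 hm
  have h₁ := abs_mul_sub_mul_le_of_sqrt_window hn1 hp.le hK₁.le hs hxΛ
    (hL₁ x (hxΛ.trans_lt hwin.1.1))
  have h₂ := abs_mul_sub_mul_le_of_sqrt_window hn1 hq hK₂.le (by rwa [← mul_assoc]) hxΛ
    (hL₂ x (hxΛ.trans_lt hwin.1.2))
  have hE : |-(n * (x - Λ₀)) + ((n - m : ℕ) : ℝ) * log ((1 + x + x ^ 2 / 2) / D)
      + r * log (x / Λ₀)| ≤ C := by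
    refine le_of_eq_of_le ?_ ((abs_add_le _ _).trans (add_le_add h₁ h₂))
    congr 1
    linear_combination (n * (x - Λ₀)) * hlin
  rw [exp_mul_pow_mul_pow (by positivity) (div_pos hx hΛ)]
  exact ⟨hmn, exp_le_exp.2 (neg_le_of_abs_le hE), exp_le_exp.2 (le_of_abs_le hE)⟩

/-- The analytic core of Lemma 3.3: the likelihood ratio
`e^{−n(x−Λ₀)}·((1+x+x²/2)/(1+Λ₀+Λ₀²/2))^{n−m}·(x/Λ₀)^r` is bounded between two positive
constants in the stated windows for `m`, `r` and `x`. -/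
theorem likelihood_ratio_bounded (Λ₀ M : ℝ) (hΛ : 0 < Λ₀) (hM : 0 < M) :
    ∃ c₁ c₂ : ℝ, 0 < c₁ ∧ 0 < c₂ ∧ ∃ N : ℕ, ∀ n : ℕ, N ≤ n → ∀ m r : ℕ,
      |(m : ℝ) - n * (1 - Real.exp (-Λ₀) * (1 + Λ₀ + Λ₀ ^ 2 / 2))| ≤ M * Real.sqrt n →
      |(r : ℝ) - n * Λ₀ * (1 - Real.exp (-Λ₀) * (1 + Λ₀))| ≤ M * Real.sqrt n →
      ∀ x : ℝ, 0 < x → |x - Λ₀| ≤ M / Real.sqrt n →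
        m ≤ n ∧
        c₁ ≤ Real.exp (-(n * (x - Λ₀)))
              * ((1 + x + x ^ 2 / 2) / (1 + Λ₀ + Λ₀ ^ 2 / 2)) ^ (n - m)
              * (x / Λ₀) ^ r ∧
        Real.exp (-(n * (x - Λ₀)))
              * ((1 + x + x ^ 2 / 2) / (1 + Λ₀ + Λ₀ ^ 2 / 2)) ^ (n - m)
              * (x / Λ₀) ^ r ≤ c₂ :=
  likelihood_ratio_bounded_general Λ₀ M hΛ
end

section
/- Let λ > 1 with conjugate μ ∈ (0,1) (i.e. μ·e^{−μ} = λ·e^{−λ}), set Λ₀ = λ − μ, and fix M > 0. There exist a constant c > 0 and N ∈ ℕ such that for all n ≥ N, all reals x > 0 with |x − Λ₀| ≤ M/√n, all natural numbers m, r with |m − n·(1 − e^{−Λ₀}(1 + Λ₀ + Λ₀²/2))| ≤ M√n and |r − (n/2)·Λ₀·(1 − e^{−Λ₀}(1 + Λ₀))| ≤ M√n, and every natural number s with |s − (n/2)·Λ₀·(1 − e^{−Λ₀})| ≤ M√n, the following holds: if W is a Binomial(n − m, (x²/2)/(1 + x + x²/2)) random variable, then P(r + W = s) ≤ c/√n.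 -/
/-! The point masses of Binomial(N, p) are at most √8 / σ, where σ² = N p (1 - p), uniformly in
the point. By the symmetry k ↦ N - k, p ↦ 1 - p we may take k ≤ N p; on the d ≈ σ / √2 points
above k the mass ratios b(j + 1) / b(j) stay above 1 - d / σ², so by Bernoulli's inequality these
d + 1 masses are all at least b(k) / 2, while they sum to at most 1.

Here N = n - m ≥ α n / 2 with α = e^{-Λ₀} (1 + Λ₀ + Λ₀² / 2), and p (1 - p) is bounded below
because x is close to Λ₀ > 0, so σ² is of order n. -/

open Finset Filter Topology MeasureTheory

noncomputable def binomialMass (N : ℕ) (p : ℝ) (k : ℕ) : ℝ :=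
  N.choose k * p ^ k * (1 - p) ^ (N - k)

lemma pow_mul_le_of_mul_le_succ {f : ℕ → ℝ} {ρ : ℝ} {k d : ℕ} (hρ : 0 ≤ ρ)
    (hf : ∀ j, k ≤ j → j < k + d → ρ * f j ≤ f (j + 1)) {i : ℕ} (hi : i ≤ d) :
    ρ ^ i * f k ≤ f (k + i) := by
  induction i with
  | zero => simp
  | succ i ih =>
    calc ρ ^ (i + 1) * f k = ρ * (ρ ^ i * f k) := by ring
      _ ≤ ρ * f (k + i) := mul_le_mul_of_nonneg_left (ih (by omega)) hρ
      _ ≤ f (k + (i + 1)) := hf _ (by omega) (by omega)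

section binomialMass

variable {N : ℕ} {p : ℝ}

lemma binomialMass_nonneg (hp₀ : 0 ≤ p) (hp₁ : p ≤ 1) (k : ℕ) : 0 ≤ binomialMass N p k := by
  have : 0 ≤ 1 - p := by linarith
  unfold binomialMass
  positivity

lemma sum_range_binomialMass (N : ℕ) (p : ℝ) : ∑ k ∈ range (N + 1), binomialMass N p k = 1 := by
  have h := (add_pow p (1 - p) N).symm
  rw [add_sub_cancel, one_pow] at h
  rw [← h]
  exact sum_congr rfl fun k _ => by unfold binomialMass; ring

lemma binomialMass_le_one (hp₀ : 0 ≤ p) (hp₁ : p ≤ 1) (k : ℕ) : binomialMass N p k ≤ 1 := by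
  rcases le_or_gt k N with hk | hk
  · rw [← sum_range_binomialMass N p]
    exact single_le_sum (fun j _ => binomialMass_nonneg hp₀ hp₁ j) (mem_range.mpr (by omega))
  · simp [binomialMass, Nat.choose_eq_zero_of_lt hk]

lemma sum_range_binomialMass_add_le (hp₀ : 0 ≤ p) (hp₁ : p ≤ 1) {k d : ℕ} (hkd : k + d ≤ N) :
    ∑ i ∈ range (d + 1), binomialMass N p (k + i) ≤ 1 := by
  rw [← sum_range_binomialMass N p]
  refine (sum_map (range (d + 1)) (addLeftEmbedding k) (binomialMass N p)).symm.trans_le ?_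
  refine sum_le_sum_of_subset_of_nonneg ?_ fun j _ _ => binomialMass_nonneg hp₀ hp₁ j
  intro j hj
  obtain ⟨i, hi, rfl⟩ := Finset.mem_map.mp hj
  simp only [mem_range, addLeftEmbedding_apply] at hi ⊢
  omega

lemma binomialMass_one_sub {k : ℕ} (hk : k ≤ N) :
    binomialMass N (1 - p) (N - k) = binomialMass N p k := by
  unfold binomialMass
  rw [Nat.choose_symm hk, Nat.sub_sub_self hk, sub_sub_cancel]
  ring

lemma binomialMass_succ_mul {k : ℕ} (hk : k < N) (p : ℝ) :
    binomialMass N p (k + 1) * ((k + 1) * (1 - p)) = binomialMass N p k * ((N - k) * p) := by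
  have hchoose : (N.choose (k + 1) : ℝ) * (k + 1) = N.choose k * (N - k) := by
    rw [← Nat.cast_sub hk.le]
    exact_mod_cast Nat.choose_succ_right_eq N k
  have hexp : N - k = N - (k + 1) + 1 := by omega
  unfold binomialMass
  rw [hexp, pow_succ, pow_succ]
  linear_combination hchoose * (p ^ k * p * (1 - p) ^ (N - (k + 1)) * (1 - p))

lemma mul_binomialMass_le_succ {k : ℕ} {ρ : ℝ} (hk : k < N) (hp₀ : 0 ≤ p) (hp₁ : p < 1)
    (hρ : ρ * ((k + 1) * (1 - p)) ≤ (N - k) * p) :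
    ρ * binomialMass N p k ≤ binomialMass N p (k + 1) := by
  have hpos : (0 : ℝ) < (k + 1) * (1 - p) := mul_pos (by positivity) (by linarith)
  refine le_of_mul_le_mul_right ?_ hpos
  calc ρ * binomialMass N p k * ((k + 1) * (1 - p))
      = binomialMass N p k * (ρ * ((k + 1) * (1 - p))) := by ring
    _ ≤ binomialMass N p k * ((N - k) * p) :=
      mul_le_mul_of_nonneg_left hρ (binomialMass_nonneg hp₀ hp₁.le k)
    _ = binomialMass N p (k + 1) * ((k + 1) * (1 - p)) := (binomialMass_succ_mul hk p).symm

lemma one_sub_div_mul_le_of_le_mean (hp₀ : 0 ≤ p) (hp₁ : p ≤ 1) {k d j : ℕ}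
    (hσ2 : 0 < N * p * (1 - p)) (hdσ2 : (d : ℝ) ≤ N * p * (1 - p)) (hk : (k : ℝ) ≤ N * p) (hj : j < k + d) :
    (1 - d / (N * p * (1 - p))) * ((j + 1) * (1 - p)) ≤ (N - j) * p := by
  set σ2 := (N : ℝ) * p * (1 - p)
  set ρ := 1 - d / σ2
  have hρσ2 : ρ * σ2 = σ2 - d := by rw [sub_mul, div_mul_cancel₀ _ hσ2.ne', one_mul]
  have hρ₀ : 0 ≤ ρ := sub_nonneg.mpr (div_le_one_of_le₀ hdσ2 hσ2.le)
  have hρ₁ : ρ ≤ 1 := sub_le_self _ (by positivity)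
  have hq : 0 ≤ 1 - p := by linarith
  have hj : (j : ℝ) + 1 ≤ N * p + d := by
    have : (j : ℝ) + 1 ≤ k + d := by exact_mod_cast hj
    linarith
  calc ρ * ((j + 1) * (1 - p)) ≤ ρ * ((N * p + d) * (1 - p)) := by gcongr
    _ = ρ * σ2 + ρ * d * (1 - p) := by ring
    _ ≤ σ2 - d + d * (1 - p) := by rw [hρσ2]; gcongr; nlinarith
    _ ≤ (N - j) * p := by nlinarith

lemma succ_mul_binomialMass_le_two (hp₀ : 0 ≤ p) (hp₁ : p < 1) {k d : ℕ}
    (hk : (k : ℝ) ≤ N * p) (hd : 2 * (d : ℝ) ^ 2 ≤ N * p * (1 - p)) :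
    (d + 1) * binomialMass N p k ≤ 2 := by
  rcases Nat.eq_zero_or_pos d with rfl | hd₀
  · simpa using (binomialMass_le_one (N := N) hp₀ hp₁.le k).trans one_le_two
  set σ2 := (N : ℝ) * p * (1 - p)
  have hd₁ : (1 : ℝ) ≤ d := by exact_mod_cast hd₀
  have hσ2 : 0 < σ2 := by nlinarith
  have hdσ2 : (d : ℝ) ≤ σ2 := by nlinarith
  set ρ := 1 - d / σ2
  have hρ₀ : 0 ≤ ρ := sub_nonneg.mpr (div_le_one_of_le₀ hdσ2 hσ2.le)
  have hkd : k + d ≤ N := by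
    have : (k : ℝ) + d ≤ N := by nlinarith
    exact_mod_cast this
  have hhalf (i : ℕ) (hi : i ∈ range (d + 1)) :
      binomialMass N p k / 2 ≤ binomialMass N p (k + i) := by
    have hi : i ≤ d := Nat.lt_succ_iff.mp (mem_range.mp hi)
    have hρi : 1 / 2 ≤ ρ ^ i := by
      refine le_trans ?_ (one_add_mul_sub_le_pow (by linarith) i)
      have : (i : ℝ) * (d / σ2) ≤ d * (d / σ2) := by gcongr
      have : (d : ℝ) * (d / σ2) ≤ 1 / 2 := by
        rw [← mul_div_assoc, div_le_iff₀ hσ2]; nlinarith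
      simp only [ρ]; linarith
    calc binomialMass N p k / 2 ≤ ρ ^ i * binomialMass N p k := by
          nlinarith [binomialMass_nonneg (N := N) hp₀ hp₁.le k]
      _ ≤ binomialMass N p (k + i) := pow_mul_le_of_mul_le_succ (f := binomialMass N p) hρ₀
          (fun j _ hj => mul_binomialMass_le_succ (by omega) hp₀ hp₁
            (one_sub_div_mul_le_of_le_mean hp₀ hp₁.le hσ2 hdσ2 hk hj)) hi
  calc (d + 1) * binomialMass N p k = 2 * ∑ _i ∈ range (d + 1), binomialMass N p k / 2 := by
        simp only [sum_const, card_range, nsmul_eq_mul]; push_cast; ring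
    _ ≤ 2 * ∑ i ∈ range (d + 1), binomialMass N p (k + i) :=
      mul_le_mul_of_nonneg_left (sum_le_sum hhalf) zero_le_two
    _ ≤ 2 := by linarith [sum_range_binomialMass_add_le hp₀ hp₁.le hkd]

lemma sq_binomialMass_mul_le_of_le_mean (hp₀ : 0 ≤ p) (hp₁ : p < 1) {k : ℕ}
    (hk : (k : ℝ) ≤ N * p) : binomialMass N p k ^ 2 * (N * p * (1 - p)) ≤ 8 := by
  set σ2 := (N : ℝ) * p * (1 - p)
  have hσ2 : 0 ≤ σ2 := mul_nonneg (by positivity) (by linarith)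
  set d := ⌊√(σ2 / 2)⌋₊
  have hsq : √(σ2 / 2) ^ 2 = σ2 / 2 := Real.sq_sqrt (by positivity)
  have hd_le : (d : ℝ) ^ 2 ≤ √(σ2 / 2) ^ 2 :=
    pow_le_pow_left₀ (Nat.cast_nonneg d) (Nat.floor_le (Real.sqrt_nonneg _)) 2
  have hd_lt : √(σ2 / 2) ^ 2 ≤ ((d : ℝ) + 1) ^ 2 :=
    pow_le_pow_left₀ (Real.sqrt_nonneg _) (Nat.lt_floor_add_one _).le 2
  have hb := succ_mul_binomialMass_le_two hp₀ hp₁ hk (d := d) (by linarith)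
  have hb₀ := binomialMass_nonneg (N := N) hp₀ hp₁.le k
  calc binomialMass N p k ^ 2 * σ2 ≤ binomialMass N p k ^ 2 * (2 * ((d : ℝ) + 1) ^ 2) := by
        gcongr; linarith
    _ = 2 * (((d : ℝ) + 1) * binomialMass N p k) ^ 2 := by ring
    _ ≤ 2 * 2 ^ 2 := by gcongr
    _ = 8 := by norm_num

end binomialMass

lemma sq_binomialMass_mul_le (N : ℕ) (p : ℝ) (k : ℕ) :
    binomialMass N p k ^ 2 * (N * p * (1 - p)) ≤ 8 := by
  rcases le_or_gt ((N : ℝ) * p * (1 - p)) 0 with hσ2 | hσ2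
  · nlinarith [sq_nonneg (binomialMass N p k)]
  have hp₀ : 0 < p := by
    by_contra! h
    linarith [mul_nonpos_of_nonpos_of_nonneg (mul_nonpos_of_nonneg_of_nonpos N.cast_nonneg h)
      (by linarith : (0 : ℝ) ≤ 1 - p)]
  have hp₁ : p < 1 := by
    by_contra! h
    linarith [mul_nonpos_of_nonneg_of_nonpos (by positivity : (0 : ℝ) ≤ N * p)
      (by linarith : 1 - p ≤ 0)]
  rcases le_or_gt k N with hkN | hkN
  swap
  · simp [binomialMass, Nat.choose_eq_zero_of_lt hkN]
  rcases le_or_gt (k : ℝ) (N * p) with hk | hk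
  · exact sq_binomialMass_mul_le_of_le_mean hp₀.le hp₁ hk
  · rw [← binomialMass_one_sub hkN]
    have hk' : ((N - k : ℕ) : ℝ) ≤ N * (1 - p) := by
      rw [Nat.cast_sub hkN]; linarith
    calc binomialMass N (1 - p) (N - k) ^ 2 * (N * p * (1 - p))
        = binomialMass N (1 - p) (N - k) ^ 2 * (N * (1 - p) * (1 - (1 - p))) := by ring
      _ ≤ 8 := sq_binomialMass_mul_le_of_le_mean (by linarith) (by linarith) hk'

lemma PMF.toMeasure_setOf_add_eq_le (W : PMF ℕ) (r s : ℕ) :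
    W.toMeasure {k | r + k = s} ≤ W (s - r) := by
  rw [← W.toMeasure_apply_singleton _ (measurableSet_singleton _)]
  refine measure_mono fun k (hk : r + k = s) => ?_
  rw [Set.mem_singleton_iff]
  omega

lemma le_sqrt_div_sqrt_of_sq_mul_le {b C n : ℝ} (hn : 0 < n) (h : b ^ 2 * n ≤ C) :
    b ≤ √C / √n := by
  rcases lt_or_ge b 0 with hb | hb
  · exact hb.le.trans (by positivity)
  rw [le_div_iff₀ (Real.sqrt_pos.mpr hn), Real.le_sqrt (by positivity) (by nlinarith),
    mul_pow, Real.sq_sqrt hn.le]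
  exact h

lemma PMF.toReal_toMeasure_setOf_add_eq_le_of_binomial {W : PMF ℕ} {N : ℕ} {p κ n : ℝ}
    (hW : ∀ k, W k = ENNReal.ofReal (binomialMass N p k)) (hκ : 0 < κ) (hn : 0 < n)
    (hσ2 : κ * n ≤ N * p * (1 - p)) (r s : ℕ) :
    (W.toMeasure {k | r + k = s}).toReal ≤ √(8 / κ) / √n := by
  refine ENNReal.toReal_le_of_le_ofReal (by positivity)
    ((W.toMeasure_setOf_add_eq_le r s).trans ((hW _).trans_le (ENNReal.ofReal_le_ofReal ?_)))
  refine le_sqrt_div_sqrt_of_sq_mul_le hn ?_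
  rw [le_div_iff₀ hκ]
  linarith [sq_binomialMass_mul_le N p (s - r),
    mul_le_mul_of_nonneg_left hσ2 (sq_nonneg (binomialMass N p (s - r)))]

lemma exists_pos_eventually_lt_mul_one_sub {Λ : ℝ} (hΛ : 0 < Λ) :
    ∃ v > 0, ∀ᶠ x in 𝓝 Λ,
      v < x ^ 2 / 2 / (1 + x + x ^ 2 / 2) * (1 - x ^ 2 / 2 / (1 + x + x ^ 2 / 2)) := by
  set P : ℝ → ℝ := fun x => x ^ 2 / 2 / (1 + x + x ^ 2 / 2)
  have hD : 0 < 1 + Λ + Λ ^ 2 / 2 := by nlinarith [sq_nonneg (Λ + 1)]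
  have hP : ContinuousAt P Λ := ContinuousAt.div (by fun_prop) (by fun_prop) hD.ne'
  have hP₀ : 0 < P Λ := div_pos (by positivity) hD
  have hP₁ : P Λ < 1 := (div_lt_one hD).mpr (by linarith)
  have hv : 0 < P Λ * (1 - P Λ) := mul_pos hP₀ (by linarith)
  exact ⟨_, half_pos hv,
    continuousAt_const.eventually_lt (hP.mul (continuousAt_const.sub hP)) (half_lt_self hv)⟩

lemma eventually_div_sqrt_natCast_lt (M : ℝ) {ε : ℝ} (hε : 0 < ε) :
    ∀ᶠ n : ℕ in atTop, M / √n < ε :=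
  (tendsto_const_nhds.div_atTop
    (Real.tendsto_sqrt_atTop.comp tendsto_natCast_atTop_atTop)).eventually (gt_mem_nhds hε)

theorem poisson_conf_edge_count_upper_general (lam mu : ℝ) (hlam : 1 < lam)
    (hmu : mu ∈ Set.Ioo (0 : ℝ) 1) (M : ℝ) :
    ∃ c : ℝ, 0 < c ∧ ∃ N : ℕ, ∀ n : ℕ, N ≤ n →
      ∀ x : ℝ, 0 < x → |x - (lam - mu)| ≤ M / Real.sqrt n →
      ∀ m r : ℕ,
        |(m : ℝ) - n * (1 - Real.exp (-(lam - mu))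
            * (1 + (lam - mu) + (lam - mu) ^ 2 / 2))| ≤ M * Real.sqrt n →
        |(r : ℝ) - n / 2 * (lam - mu)
            * (1 - Real.exp (-(lam - mu)) * (1 + (lam - mu)))| ≤ M * Real.sqrt n →
      ∀ s : ℕ,
        |(s : ℝ) - n / 2 * (lam - mu) * (1 - Real.exp (-(lam - mu)))| ≤ M * Real.sqrt n →
      ∀ W : PMF ℕ,
        (∀ k : ℕ, W k = ENNReal.ofReal (((n - m).choose k : ℝ)
            * ((x ^ 2 / 2) / (1 + x + x ^ 2 / 2)) ^ k
            * (1 - (x ^ 2 / 2) / (1 + x + x ^ 2 / 2)) ^ (n - m - k))) →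
        (W.toMeasure {k : ℕ | r + k = s}).toReal ≤ c / Real.sqrt n := by
  set Λ := lam - mu
  set α := Real.exp (-Λ) * (1 + Λ + Λ ^ 2 / 2)
  have hΛ : 0 < Λ := by linarith [hmu.2]
  have hα : 0 < α := by positivity
  obtain ⟨v, hv, hev⟩ := exists_pos_eventually_lt_mul_one_sub hΛ
  obtain ⟨δ, hδ, hδv⟩ := Metric.eventually_nhds_iff.mp hev
  obtain ⟨N, hN⟩ := eventually_atTop.mp <| (eventually_gt_atTop 0).and
    (eventually_div_sqrt_natCast_lt M (lt_min hδ (half_pos hα)))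
  refine ⟨√(8 / (α / 2 * v)), by positivity, N, fun n hn x _ hx m r hm _ s _ W hW => ?_⟩
  obtain ⟨hn₀, hMn⟩ := hN n hn
  have hn₀' : (0 : ℝ) < n := by exact_mod_cast hn₀
  set P := x ^ 2 / 2 / (1 + x + x ^ 2 / 2)
  have hvP : v < P * (1 - P) := hδv (by rw [Real.dist_eq]; linarith [min_le_left δ (α / 2)])
  have hMsqrt : M * √n ≤ α / 2 * n := by
    rw [← Real.div_sqrt, mul_div_assoc', ← div_mul_eq_mul_div]
    exact mul_le_mul_of_nonneg_right (by linarith [min_le_right δ (α / 2)]) hn₀'.le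
  have hnm : α / 2 * n ≤ ((n - m : ℕ) : ℝ) := by
    have hm' := (abs_le.mp hm).2
    rw [Nat.cast_sub (by exact_mod_cast (by nlinarith : (m : ℝ) ≤ n))]
    linarith
  refine PMF.toReal_toMeasure_setOf_add_eq_le_of_binomial hW (by positivity) hn₀' ?_ r s
  calc α / 2 * v * n = α / 2 * n * v := by ring
    _ ≤ ((n - m : ℕ) : ℝ) * (P * (1 - P)) := mul_le_mul hnm hvP.le hv.le (by positivity)
    _ = ((n - m : ℕ) : ℝ) * P * (1 - P) := by ring

/-- Lemma 4.2 of the paper: for a 'good' kernel with `m` vertices and `r` edges, and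
`W ~ Binomial(n−m, (x²/2)/(1+x+x²/2))`, the point probabilities `P(r + W = s)` in the
window `|s − (n/2)·Λ₀·(1−e^{−Λ₀})| ≤ M√n` are at most `c/√n`. -/
theorem poisson_conf_edge_count_upper (lam mu : ℝ) (hlam : 1 < lam)
    (hmu : mu ∈ Set.Ioo (0 : ℝ) 1)
    (hconj : mu * Real.exp (-mu) = lam * Real.exp (-lam)) (M : ℝ) (hM : 0 < M) :
    ∃ c : ℝ, 0 < c ∧ ∃ N : ℕ, ∀ n : ℕ, N ≤ n →
      ∀ x : ℝ, 0 < x → |x - (lam - mu)| ≤ M / Real.sqrt n →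
      ∀ m r : ℕ,
        |(m : ℝ) - n * (1 - Real.exp (-(lam - mu))
            * (1 + (lam - mu) + (lam - mu) ^ 2 / 2))| ≤ M * Real.sqrt n →
        |(r : ℝ) - n / 2 * (lam - mu)
            * (1 - Real.exp (-(lam - mu)) * (1 + (lam - mu)))| ≤ M * Real.sqrt n →
      ∀ s : ℕ,
        |(s : ℝ) - n / 2 * (lam - mu) * (1 - Real.exp (-(lam - mu)))| ≤ M * Real.sqrt n →
      ∀ W : PMF ℕ,
        (∀ k : ℕ, W k = ENNReal.ofReal (((n - m).choose k : ℝ)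
            * ((x ^ 2 / 2) / (1 + x + x ^ 2 / 2)) ^ k
            * (1 - (x ^ 2 / 2) / (1 + x + x ^ 2 / 2)) ^ (n - m - k))) →
        (W.toMeasure {k : ℕ | r + k = s}).toReal ≤ c / Real.sqrt n :=
  poisson_conf_edge_count_upper_general lam mu hlam hmu M
end

section
/- Let λ > 1 with conjugate μ ∈ (0,1) (i.e. μ·e^{−μ} = λ·e^{−λ}) and fix M > 0. There exist a constant c > 0 and N ∈ ℕ such that for all n ≥ N and all positive integers r, s with |r − (n/2)(λ−μ)(1−μ/λ)(1−μ)| ≤ M√n and |s − (n/2)(λ−μ)(1−μ/λ)| ≤ M√n, the following holds: if X_1, …, X_r are i.i.d. random variables with P(X_i = k) = μ^{k−1}(1−μ) for every integer k ≥ 1, then P(X_1 + ⋯ + X_r = s) ≥ c/√n. -/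
/-
The sum of `r` i.i.d. `Geom(1 - μ)` variables is negative binomial: by stars and bars on the
excesses `Xᵢ - 1`, `P(X₁ + ⋯ + Xᵣ = s) = C(s-1, s-r) μ^(s-r) (1-μ)^r`.
With `b = r - 1` and `c = s - r`, Stirling's formula bounds `C(b+c, c) (1-μ)^b μ^c` below by
`const · exp(-χ²) / √(b+c)`, where `χ² = (b - (1-μ)(b+c))² / ((b+c) μ (1-μ))` comes
from `log x ≥ 1 - 1/x`. In the window `b + c ≍ n`, and `|b - (1-μ)(b+c)| = O(√n)` because
the centre of `r` is `1 - μ` times the centre of `s`; so `χ²` stays bounded.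
-/

open Finset MeasureTheory Real Filter
open scoped Nat

noncomputable def geomMass (μ : ℝ) (k : ℕ) : ℝ :=
  if 1 ≤ k then μ ^ (k - 1) * (1 - μ) else 0

lemma card_antidiagonalTuple (k n : ℕ) :
    #(Nat.antidiagonalTuple k n) = (k + n - 1).choose n := by
  rw [← piAntidiag_univ_fin_eq_antidiagonalTuple, ← map_sym_eq_piAntidiag, card_map, sym_univ,
    card_univ, Sym.card_sym_eq_choose, Fintype.card_fin]

lemma sum_antidiagonalTuple_prod_geomMass (μ : ℝ) {r s : ℕ} (hrs : r ≤ s) :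
    ∑ f ∈ Nat.antidiagonalTuple r s, ∏ i, geomMass μ (f i) =
      (s - 1).choose (s - r) * μ ^ (s - r) * (1 - μ) ^ r := by
  let shift : (Fin r → ℕ) ↪ (Fin r → ℕ) := ⟨(· + 1), add_left_injective 1⟩
  have hshift : (Nat.antidiagonalTuple r (s - r)).map shift ⊆ Nat.antidiagonalTuple r s := by
    intro f hf
    obtain ⟨g, hg, rfl⟩ := mem_map.1 hf
    rw [Nat.mem_antidiagonalTuple] at hg ⊢
    simp [shift, sum_add_distrib, hg, Nat.sub_add_cancel hrs]
  rw [← sum_subset hshift, sum_map]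
  · have hterm : ∀ g ∈ Nat.antidiagonalTuple r (s - r),
        ∏ i, geomMass μ (shift g i) = μ ^ (s - r) * (1 - μ) ^ r := by
      intro g hg
      rw [Nat.mem_antidiagonalTuple] at hg
      simp [shift, geomMass, prod_mul_distrib, prod_pow_eq_pow_sum, hg]
    rw [sum_congr rfl hterm, sum_const, card_antidiagonalTuple, nsmul_eq_mul,
      Nat.add_sub_cancel' hrs]
    ring
  · intro f hf hfs
    obtain ⟨i, hi⟩ : ∃ i, f i = 0 := by
      by_contra! hpos
      refine hfs (mem_map.2 ⟨fun i => f i - 1, ?_, funext fun i => ?_⟩)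
      · rw [Nat.mem_antidiagonalTuple] at hf ⊢
        rw [sum_tsub_distrib _ fun i _ => Nat.one_le_iff_ne_zero.2 (hpos i)]
        simp [hf]
      · simp [shift, Nat.sub_add_cancel (Nat.one_le_iff_ne_zero.2 (hpos i))]
    exact prod_eq_zero (mem_univ i) (by simp [geomMass, hi])

lemma pi_toMeasure_sum_eq_sum_prod {r : ℕ} (X : Fin r → PMF ℕ) (s : ℕ) :
    Measure.pi (fun i => (X i).toMeasure) {f | ∑ i, f i = s} =
      ∑ f ∈ Nat.antidiagonalTuple r s, ∏ i, X i (f i) := by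
  have : {f : Fin r → ℕ | ∑ i, f i = s} = ↑(Nat.antidiagonalTuple r s) := by
    ext; simp [Nat.mem_antidiagonalTuple]
  rw [this, ← sum_measure_singleton]
  simp [Measure.pi_singleton, PMF.toMeasure_apply_singleton]

lemma geometric_sum_prob_eq {μ : ℝ} (hμ0 : 0 ≤ μ) (hμ1 : μ ≤ 1) {r s : ℕ}
    (hrs : r ≤ s) (X : PMF ℕ) (hX : ∀ k, X k = ENNReal.ofReal (geomMass μ k)) :
    (Measure.pi (fun _ : Fin r => X.toMeasure) {f | ∑ i, f i = s}).toReal =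
      (s - 1).choose (s - r) * μ ^ (s - r) * (1 - μ) ^ r := by
  have hnonneg (k : ℕ) : 0 ≤ geomMass μ k := by
    unfold geomMass
    split_ifs
    exacts [mul_nonneg (pow_nonneg hμ0 _) (sub_nonneg.2 hμ1), le_rfl]
  rw [pi_toMeasure_sum_eq_sum_prod,
    ENNReal.toReal_sum fun f _ => ENNReal.prod_ne_top fun i _ => X.apply_ne_top _,
    ← sum_antidiagonalTuple_prod_geomMass μ hrs]
  simp [hX, ENNReal.toReal_prod, ENNReal.toReal_ofReal (hnonneg _)]

lemma factorial_le_stirling {n : ℕ} (hn : n ≠ 0) :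
    (n ! : ℝ) ≤ exp 1 * √n * (n / exp 1) ^ n := by
  obtain ⟨m, rfl⟩ : ∃ m, n = m + 1 := ⟨n - 1, by omega⟩
  have hle : Stirling.stirlingSeq (m + 1) ≤ exp 1 / √2 := by
    rw [← Stirling.stirlingSeq_one]; exact Stirling.stirlingSeq'_antitone (Nat.zero_le m)
  unfold Stirling.stirlingSeq at hle
  rw [div_le_div_iff₀ (by positivity) (by positivity), sqrt_mul zero_le_two] at hle
  refine le_of_mul_le_mul_right ?_ (by positivity : (0 : ℝ) < √2)
  linarith

lemma exp_neg_chiSq_le {p q : ℝ} (hp : 0 < p) (hq : 0 < q) (hpq : p + q = 1) {b c : ℕ}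
    (hb : b ≠ 0) (hc : c ≠ 0) :
    exp (-((b - p * (b + c)) ^ 2 / ((b + c) * p * q))) ≤
      (p * (b + c) / b) ^ b * (q * (b + c) / c) ^ c := by
  have hb' : (0 : ℝ) < b := by positivity
  have hc' : (0 : ℝ) < c := by positivity
  have hx : 0 < p * (b + c) / b := by positivity
  have hy : 0 < q * (b + c) / c := by positivity
  rw [← exp_log (mul_pos (pow_pos hx b) (pow_pos hy c)), exp_le_exp, log_mul (by positivity)
    (by positivity), log_pow, log_pow]
  have hlx := mul_le_mul_of_nonneg_left (one_sub_inv_le_log_of_pos hx) hb'.le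
  have hly := mul_le_mul_of_nonneg_left (one_sub_inv_le_log_of_pos hy) hc'.le
  have hchi : (b : ℝ) * (1 - (p * (b + c) / b)⁻¹) + c * (1 - (q * (b + c) / c)⁻¹) =
      -((b - p * (b + c)) ^ 2 / ((b + c) * p * q)) := by
    rw [show q = 1 - p by linarith]
    have : 1 - p ≠ 0 := by linarith
    field_simp
    ring
  linarith

lemma binomial_term_ge {p q : ℝ} (hp : 0 < p) (hq : 0 < q) (hpq : p + q = 1) {b c : ℕ}
    (hb : b ≠ 0) (hc : c ≠ 0) :
    √(2 * π) / exp 2 * exp (-((b - p * (b + c)) ^ 2 / ((b + c) * p * q))) / √(b + c) ≤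
      (b + c).choose c * p ^ b * q ^ c := by
  have hb' : (0 : ℝ) < b := by positivity
  have hc' : (0 : ℝ) < c := by positivity
  set A : ℝ := b + c
  have hA : 0 < A := by positivity
  have hfA : √(2 * π) * √A * (A / exp 1) ^ (b + c) ≤ ((b + c) ! : ℝ) := by
    have := Stirling.le_factorial_stirling (b + c)
    push_cast at this
    rwa [sqrt_mul (by positivity)] at this
  have hfbc :
      (b ! : ℝ) * c ! ≤ exp 1 * √b * (b / exp 1) ^ b * (exp 1 * √c * (c / exp 1) ^ c) :=
    mul_le_mul (factorial_le_stirling hb) (factorial_le_stirling hc) (by positivity) (by positivity)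
  have hsqrt : √b * √c ≤ A := by
    rw [← sqrt_mul hb'.le]
    exact sqrt_le_iff.2 ⟨hA.le, by nlinarith⟩
  calc √(2 * π) / exp 2 * exp (-((b - p * A) ^ 2 / (A * p * q))) / √A
      ≤ √(2 * π) / exp 2 * (√A / (√b * √c)) * ((p * A / b) ^ b * (q * A / c) ^ c) := by
        have hinv : 1 / √A ≤ √A / (√b * √c) := by
          rw [div_le_div_iff₀ (by positivity) (by positivity), one_mul, mul_self_sqrt hA.le]
          exact hsqrt
        calc _ = √(2 * π) / exp 2 * (1 / √A) * exp (-((b - p * A) ^ 2 / (A * p * q))) := by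
              ring
          _ ≤ _ := by gcongr; exact exp_neg_chiSq_le hp hq hpq hb hc
    _ = √(2 * π) * √A * (A / exp 1) ^ (b + c) * p ^ b * q ^ c /
          (exp 1 * √b * (b / exp 1) ^ b * (exp 1 * √c * (c / exp 1) ^ c)) := by
        rw [show exp 2 = exp 1 * exp 1 by rw [← exp_add]; norm_num]
        simp only [div_pow, mul_pow, pow_add]
        field_simp
    _ ≤ ((b + c) ! : ℝ) * p ^ b * q ^ c / (b ! * c !) := by
        gcongr
    _ = (b + c).choose c * p ^ b * q ^ c := by
        rw [Nat.cast_choose ℝ (Nat.le_add_left c b), Nat.add_sub_cancel]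
        ring

lemma eventually_mul_sqrt_add_le {α : ℝ} (hα : 0 < α) (β γ : ℝ) :
    ∀ᶠ n : ℕ in atTop, β * √n + γ ≤ α * n := by
  have hsqrt : Tendsto (fun n : ℕ => √(n : ℝ)) atTop atTop :=
    tendsto_sqrt_atTop.comp tendsto_natCast_atTop_atTop
  filter_upwards [hsqrt.eventually_ge_atTop (max 1 ((|β| + |γ|) / α))] with n hn
  rw [max_le_iff, div_le_iff₀ hα] at hn
  conv_rhs => rw [← mul_self_sqrt n.cast_nonneg]
  nlinarith [le_abs_self β, le_abs_self γ, abs_nonneg γ]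

lemma geometric_sum_window_lower {a μ M : ℝ} (ha : 0 < a) (hμ0 : 0 < μ) (hμ1 : μ < 1)
    (hM : 0 ≤ M) :
    ∃ c > 0, ∀ᶠ n : ℕ in atTop, ∀ r s : ℕ,
      |(r : ℝ) - (1 - μ) * (a * n)| ≤ M * √n → |(s : ℝ) - a * n| ≤ M * √n →
      r ≤ s ∧ c / √n ≤ (s - 1).choose (s - r) * μ ^ (s - r) * (1 - μ) ^ r := by
  have hp : 0 < 1 - μ := by linarith
  set κ := 2 * (2 * M + 1) ^ 2 / (a * (1 - μ) * μ) with hκ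
  refine ⟨√(2 * π) / exp 2 * exp (-κ) / √(a + M) * (1 - μ), by positivity, ?_⟩
  -- for large `n` the window forces `r ≥ 2`, `s ≥ r + 1` and `s - 1 ≥ a n / 2`
  filter_upwards [eventually_ge_atTop 1, eventually_mul_sqrt_add_le (mul_pos hp ha) M 2,
    eventually_mul_sqrt_add_le (mul_pos hμ0 ha) (2 * M) 1,
    eventually_mul_sqrt_add_le (half_pos ha) M 1] with n hn hr_two hgap hs_half r s hr hs
  rw [abs_le] at hr hs
  have hn' : (1 : ℝ) ≤ n := by exact_mod_cast hn
  have ht1 : 1 ≤ √n := one_le_sqrt.2 hn'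
  have htn : √n ≤ n := by nlinarith [mul_self_sqrt n.cast_nonneg]
  have hr2 : 2 ≤ r := by exact_mod_cast (show (2 : ℝ) ≤ r by linarith)
  have hrs : r + 1 ≤ s := by exact_mod_cast (show (r : ℝ) + 1 ≤ s by linarith)
  obtain ⟨b, rfl⟩ : ∃ b, r = b + 1 := ⟨r - 1, by omega⟩
  obtain ⟨c, rfl⟩ : ∃ c, s = b + 1 + c := ⟨s - (b + 1), by omega⟩
  refine ⟨by omega, ?_⟩
  rw [show b + 1 + c - 1 = b + c by omega, Nat.add_sub_cancel_left]
  push_cast at hr hs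
  have hdev : ((b : ℝ) - (1 - μ) * (b + c)) ^ 2 ≤ ((2 * M + 1) * √n) ^ 2 := by
    apply sq_le_sq'
    · nlinarith
    · nlinarith
  have hA_lo : a * n / 2 ≤ (b : ℝ) + c := by linarith
  have hA_hi : (b : ℝ) + c ≤ (a + M) * n := by nlinarith
  have hχ : ((b : ℝ) - (1 - μ) * (b + c)) ^ 2 / ((b + c) * (1 - μ) * μ) ≤ κ := by
    calc _ ≤ ((2 * M + 1) * √n) ^ 2 / (a * n / 2 * (1 - μ) * μ) := by gcongr
      _ = κ := by
        rw [mul_pow, sq_sqrt n.cast_nonneg, hκ]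
        field_simp
  have hsqrt : √((b : ℝ) + c) ≤ √(a + M) * √n := by
    rw [← sqrt_mul (by positivity)]
    exact sqrt_le_sqrt hA_hi
  calc √(2 * π) / exp 2 * exp (-κ) / √(a + M) * (1 - μ) / √n
      = √(2 * π) / exp 2 * exp (-κ) / (√(a + M) * √n) * (1 - μ) := by ring
    _ ≤ √(2 * π) / exp 2 *
          exp (-(((b : ℝ) - (1 - μ) * (b + c)) ^ 2 / ((b + c) * (1 - μ) * μ))) /
          √((b : ℝ) + c) * (1 - μ) := by
        have hb : (1 : ℝ) ≤ b := by exact_mod_cast (by omega : 1 ≤ b)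
        gcongr
    _ ≤ (b + c).choose c * (1 - μ) ^ b * μ ^ c * (1 - μ) := by
        gcongr
        exact binomial_term_ge hp hμ0 (by ring) (by omega) (by omega)
    _ = _ := by ring

theorem geometric_sum_local_lower_general (lam mu : ℝ) (hlam : 1 < lam)
    (hmu : mu ∈ Set.Ioo (0 : ℝ) 1) (M : ℝ) (hM : 0 < M) :
    ∃ c : ℝ, 0 < c ∧ ∃ N : ℕ, ∀ n : ℕ, N ≤ n → ∀ r s : ℕ, 0 < r → 0 < s →
      |(r : ℝ) - n / 2 * (lam - mu) * (1 - mu / lam) * (1 - mu)| ≤ M * Real.sqrt n →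
      |(s : ℝ) - n / 2 * (lam - mu) * (1 - mu / lam)| ≤ M * Real.sqrt n →
      ∀ X : PMF ℕ,
        (∀ k : ℕ, X k = ENNReal.ofReal (if 1 ≤ k then mu ^ (k - 1) * (1 - mu) else 0)) →
        c / Real.sqrt n ≤
          ((Measure.pi fun _ : Fin r => X.toMeasure)
            {f : Fin r → ℕ | ∑ i, f i = s}).toReal := by
  obtain ⟨hmu0, hmu1⟩ := hmu
  set a := (lam - mu) * (1 - mu / lam) / 2
  have ha : 0 < a := by
    have : mu / lam < 1 := (div_lt_one (by linarith)).2 (by linarith)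
    have : 0 < lam - mu := by linarith
    positivity
  obtain ⟨c, hc, hwindow⟩ := geometric_sum_window_lower ha hmu0 hmu1 hM.le
  obtain ⟨N, hN⟩ := eventually_atTop.1 hwindow
  refine ⟨c, hc, N, fun n hn r s _ _ hr hs X hX => ?_⟩
  rw [show (n : ℝ) / 2 * (lam - mu) * (1 - mu / lam) * (1 - mu) = (1 - mu) * (a * n) by ring]
    at hr
  rw [show (n : ℝ) / 2 * (lam - mu) * (1 - mu / lam) = a * n by ring] at hs
  obtain ⟨hrs, hlower⟩ := hN n hn r s hr hs
  rwa [geometric_sum_prob_eq hmu0.le hmu1.le hrs X hX]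

/-- Lemma 4.3 of the paper: the sum of `r` i.i.d. `Geom(1−μ)` variables hits `s` with
probability at least `c/√n`, uniformly in the stated windows for `r` and `s`. -/
theorem geometric_sum_local_lower (lam mu : ℝ) (hlam : 1 < lam)
    (hmu : mu ∈ Set.Ioo (0 : ℝ) 1)
    (hconj : mu * Real.exp (-mu) = lam * Real.exp (-lam)) (M : ℝ) (hM : 0 < M) :
    ∃ c : ℝ, 0 < c ∧ ∃ N : ℕ, ∀ n : ℕ, N ≤ n → ∀ r s : ℕ, 0 < r → 0 < s →
      |(r : ℝ) - n / 2 * (lam - mu) * (1 - mu / lam) * (1 - mu)| ≤ M * Real.sqrt n →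
      |(s : ℝ) - n / 2 * (lam - mu) * (1 - mu / lam)| ≤ M * Real.sqrt n →
      ∀ X : PMF ℕ,
        (∀ k : ℕ, X k = ENNReal.ofReal (if 1 ≤ k then mu ^ (k - 1) * (1 - mu) else 0)) →
        c / Real.sqrt n ≤
          ((Measure.pi fun _ : Fin r => X.toMeasure)
            {f : Fin r → ℕ | ∑ i, f i = s}).toReal :=
  geometric_sum_local_lower_general lam mu hlam hmu M hM
end
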